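/- arXiv:0707.0346 — 3 statements merged into one kernel-verified Lean document; each statement's English description precedes it below -/
import Mathlib

section
/- Let (uₙ*) be a sequence of nonnegative, even, radially nonincreasing functions converging to u* in L²(ℝ), with ‖uₙ*‖₂² = λ and sup_n ∫|x||uₙ*(x)|² dx < ∞. Then V(u*) ≤ liminf V(uₙ*), where V(u) = (1/2)∫∫|x-y||u(x)|²|u(y)|² dx dy. -/
/-!
Along a subsequence realising the liminf, `L²` convergence gives convergence in measure and
hence a further subsequence converging almost everywhere. Fatou's lemma on `ℝ × ℝ` for the
nonnegative integrands `|x - y| uₙ(x)² uₙ(y)²` then bounds the energy of the limit by the liminf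
of the energies. Since `|x - y| ≤ |x| + |y|`, the energies are uniformly bounded by twice the
product of first moment and mass, so all of them are finite and the Bochner double integrals and
their real liminf agree with the corresponding `ℝ≥0∞` quantities.
-/

open MeasureTheory Filter Topology
open scoped ENNReal

theorem tendstoInMeasure_of_tendsto_integral_sq_sub {α ι : Type*} [MeasurableSpace α]
    {μ : Measure α} {l : Filter ι} {f : ι → α → ℝ} {g : α → ℝ}
    (hf : ∀ i, MemLp (f i) 2 μ) (hg : MemLp g 2 μ)
    (h : Tendsto (fun i => ∫ x, (f i x - g x) ^ 2 ∂μ) l (𝓝 0)) :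
    TendstoInMeasure μ f l g := by
  refine tendstoInMeasure_of_tendsto_eLpNorm two_ne_zero (fun i => (hf i).1) hg.1 ?_
  have heq : ∀ i, eLpNorm (f i - g) 2 μ =
      ENNReal.ofReal ((∫ x, (f i x - g x) ^ 2 ∂μ) ^ (2 : ℝ)⁻¹) := fun i => by
    rw [((hf i).sub hg).eLpNorm_eq_integral_rpow_norm two_ne_zero ENNReal.ofNat_ne_top]
    simp [Real.norm_eq_abs, sq_abs]
  simp_rw [heq]
  have hcont : ContinuousAt (fun t : ℝ => ENNReal.ofReal (t ^ (2 : ℝ)⁻¹)) 0 :=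
    ENNReal.continuous_ofReal.continuousAt.comp (Real.continuousAt_rpow_const _ _ (by norm_num))
  simpa [Function.comp_def] using hcont.tendsto.comp h

theorem ENNReal.const_mul_toReal_le_liminf {f : ℕ → ℝ≥0∞} {a b : ℝ≥0∞} {c : ℝ} (hc : 0 ≤ c)
    (hb : b ≠ ∞) (hfb : ∀ n, f n ≤ b) (ha : a ≤ atTop.liminf f) :
    c * a.toReal ≤ atTop.liminf fun n => c * (f n).toReal := by
  have hcf : ∀ n, ENNReal.ofReal c * f n ≤ ENNReal.ofReal c * b := fun n => by gcongr; exact hfb n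
  have hlim : atTop.liminf (fun n => ENNReal.ofReal c * f n) ≤ ENNReal.ofReal c * b :=
    liminf_le_of_frequently_le' (Frequently.of_forall hcf)
  have hcb : ENNReal.ofReal c * b ≠ ∞ := ENNReal.mul_ne_top ENNReal.ofReal_ne_top hb
  rw [← ENNReal.toReal_ofReal hc]
  simp_rw [← ENNReal.toReal_mul]
  rw [ENNReal.liminf_toReal_eq hcb (Eventually.of_forall hcf)]
  refine ENNReal.toReal_mono (ne_top_of_le_ne_top hcb hlim) ?_
  rw [ENNReal.liminf_const_mul_of_ne_top ENNReal.ofReal_ne_top]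
  gcongr

section PairEnergy

variable {μ : Measure ℝ}

/-- The energy `2 V(w)` as a lower Lebesgue integral on `ℝ × ℝ`, where Fatou's lemma applies and no
integrability side condition is needed. -/
noncomputable def pairEnergy (μ : Measure ℝ) (w : ℝ → ℝ) : ℝ≥0∞ :=
  ∫⁻ p : ℝ × ℝ, ENNReal.ofReal (|p.1 - p.2| * w p.1 ^ 2 * w p.2 ^ 2) ∂μ.prod μ

theorem aemeasurable_pairEnergy_integrand {w : ℝ → ℝ} (hw : AEMeasurable w μ) :
    AEMeasurable (fun p : ℝ × ℝ => |p.1 - p.2| * w p.1 ^ 2 * w p.2 ^ 2) (μ.prod μ) := by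
  fun_prop

theorem pairEnergy_le_two_mul_moment_mul_mass [SFinite μ] {w : ℝ → ℝ} (hw : AEMeasurable w μ)
    (hsq : Integrable (fun x => w x ^ 2) μ) (hmom : Integrable (fun x => |x| * w x ^ 2) μ) :
    pairEnergy μ w ≤
      2 * ENNReal.ofReal (∫ x, |x| * w x ^ 2 ∂μ) * ENNReal.ofReal (∫ x, w x ^ 2 ∂μ) := by
  set A : ℝ → ℝ≥0∞ := fun x => ENNReal.ofReal (|x| * w x ^ 2)
  set B : ℝ → ℝ≥0∞ := fun x => ENNReal.ofReal (w x ^ 2)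
  have hA : AEMeasurable A μ := by fun_prop
  have hB : AEMeasurable B μ := by fun_prop
  have hpoint : ∀ p : ℝ × ℝ, ENNReal.ofReal (|p.1 - p.2| * w p.1 ^ 2 * w p.2 ^ 2) ≤
      A p.1 * B p.2 + B p.1 * A p.2 := fun p => by
    simp only [A, B]
    rw [← ENNReal.ofReal_mul (by positivity), ← ENNReal.ofReal_mul (by positivity),
      ← ENNReal.ofReal_add (by positivity) (by positivity)]
    refine ENNReal.ofReal_le_ofReal ?_
    have := mul_le_mul_of_nonneg_right (abs_sub p.1 p.2) (by positivity : 0 ≤ w p.1 ^ 2 * w p.2 ^ 2)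
    linarith
  calc pairEnergy μ w ≤ ∫⁻ p : ℝ × ℝ, (A p.1 * B p.2 + B p.1 * A p.2) ∂μ.prod μ :=
        lintegral_mono hpoint
    _ = (∫⁻ x, A x ∂μ) * (∫⁻ x, B x ∂μ) + (∫⁻ x, B x ∂μ) * (∫⁻ x, A x ∂μ) := by
        rw [lintegral_add_left' (by fun_prop), lintegral_prod_mul hA hB, lintegral_prod_mul hB hA]
    _ = _ := by
        rw [← ofReal_integral_eq_lintegral_ofReal hmom (ae_of_all _ fun x => by positivity),
          ← ofReal_integral_eq_lintegral_ofReal hsq (ae_of_all _ fun x => by positivity)]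
        ring

theorem integral_integral_eq_toReal_pairEnergy [SFinite μ] {w : ℝ → ℝ} (hw : AEMeasurable w μ)
    (hfin : pairEnergy μ w ≠ ∞) :
    ∫ x, ∫ y, |x - y| * w x ^ 2 * w y ^ 2 ∂μ ∂μ = (pairEnergy μ w).toReal := by
  have hnonneg : 0 ≤ᵐ[μ.prod μ] fun p : ℝ × ℝ => |p.1 - p.2| * w p.1 ^ 2 * w p.2 ^ 2 :=
    ae_of_all _ fun p => by positivity
  have hint : Integrable (fun p : ℝ × ℝ => |p.1 - p.2| * w p.1 ^ 2 * w p.2 ^ 2) (μ.prod μ) :=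
    ⟨(aemeasurable_pairEnergy_integrand hw).aestronglyMeasurable,
      (hasFiniteIntegral_iff_ofReal hnonneg).2 hfin.lt_top⟩
  rw [integral_integral (f := fun x y => |x - y| * w x ^ 2 * w y ^ 2) hint,
    integral_eq_lintegral_of_nonneg_ae hnonneg hint.1, pairEnergy]

theorem pairEnergy_le_liminf_of_ae_tendsto [SFinite μ] {u : ℕ → ℝ → ℝ} {v : ℝ → ℝ}
    (hu : ∀ n, AEMeasurable (u n) μ)
    (h : ∀ᵐ x ∂μ, Tendsto (fun n => u n x) atTop (𝓝 (v x))) :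
    pairEnergy μ v ≤ atTop.liminf fun n => pairEnergy μ (u n) := by
  have h1 := Measure.quasiMeasurePreserving_fst (μ := μ) (ν := μ) |>.tendsto_ae.eventually h
  have h2 := Measure.quasiMeasurePreserving_snd (μ := μ) (ν := μ) |>.tendsto_ae.eventually h
  calc pairEnergy μ v
      = ∫⁻ p : ℝ × ℝ, atTop.liminf (fun n =>
          ENNReal.ofReal (|p.1 - p.2| * u n p.1 ^ 2 * u n p.2 ^ 2)) ∂μ.prod μ := by
        refine lintegral_congr_ae ?_
        filter_upwards [h1, h2] with p hp1 hp2
        refine (Tendsto.liminf_eq ?_).symm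
        exact (ENNReal.continuous_ofReal.tendsto _).comp
          ((tendsto_const_nhds.mul (hp1.pow 2)).mul (hp2.pow 2))
    _ ≤ _ := lintegral_liminf_le' fun n => (aemeasurable_pairEnergy_integrand (hu n)).ennreal_ofReal

theorem pairEnergy_le_liminf_of_tendstoInMeasure [SFinite μ] {u : ℕ → ℝ → ℝ} {v : ℝ → ℝ}
    (hu : ∀ n, AEMeasurable (u n) μ) (h : TendstoInMeasure μ u atTop v) :
    pairEnergy μ v ≤ atTop.liminf fun n => pairEnergy μ (u n) := by
  obtain ⟨σ, hσlim, hσ⟩ := exists_seq_tendsto_liminf (f := atTop)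
    (u := fun n => pairEnergy μ (u n))
  obtain ⟨τ, hτ, hae⟩ := (h.comp hσ).exists_seq_tendsto_ae
  calc pairEnergy μ v ≤ atTop.liminf fun i => pairEnergy μ (u (σ (τ i))) :=
        pairEnergy_le_liminf_of_ae_tendsto (fun i => hu _) hae
    _ = _ := (hσlim.comp hτ.tendsto_atTop).liminf_eq

end PairEnergy

theorem potential_energy_lower_semicontinuous_general
    (u : ℕ → ℝ → ℝ) (v : ℝ → ℝ) (lam M : ℝ)
    (hmem : ∀ n, MemLp (u n) 2 (volume : Measure ℝ))
    (hvmem : MemLp v 2 (volume : Measure ℝ))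
    (hmass : ∀ n, (∫ x : ℝ, u n x ^ 2) = lam)
    (hmom : ∀ n, Integrable (fun x => |x| * u n x ^ 2))
    (hmombdd : ∀ n, (∫ x : ℝ, |x| * u n x ^ 2) ≤ M)
    (hconv : Tendsto (fun n => ∫ x : ℝ, (u n x - v x) ^ 2) atTop (nhds 0)) :
    (1 / 2) * (∫ x : ℝ, ∫ y : ℝ, |x - y| * v x ^ 2 * v y ^ 2) ≤
      atTop.liminf
        (fun n => (1 / 2) * ∫ x : ℝ, ∫ y : ℝ, |x - y| * u n x ^ 2 * u n y ^ 2) := by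
  have hu : ∀ n, AEMeasurable (u n) := fun n => (hmem n).1.aemeasurable
  have hbound : ∀ n, pairEnergy volume (u n) ≤ 2 * ENNReal.ofReal M * ENNReal.ofReal lam := fun n =>
    (pairEnergy_le_two_mul_moment_mul_mass (hu n) (hmem n).integrable_sq (hmom n)).trans <| by
      rw [hmass n]; gcongr; exact hmombdd n
  have hC : 2 * ENNReal.ofReal M * ENNReal.ofReal lam ≠ ∞ := by finiteness
  have hlsc : pairEnergy volume v ≤ atTop.liminf fun n => pairEnergy volume (u n) :=
    pairEnergy_le_liminf_of_tendstoInMeasure hu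
      (tendstoInMeasure_of_tendsto_integral_sq_sub hmem hvmem hconv)
  have hvfin : pairEnergy volume v ≠ ∞ :=
    ne_top_of_le_ne_top hC (hlsc.trans (liminf_le_of_frequently_le' (Frequently.of_forall hbound)))
  simp only [integral_integral_eq_toReal_pairEnergy (hu _) (ne_top_of_le_ne_top hC (hbound _)),
    integral_integral_eq_toReal_pairEnergy hvmem.1.aemeasurable hvfin]
  exact ENNReal.const_mul_toReal_le_liminf (by norm_num) hC hbound hlsc

/-- Lower semicontinuity of the potential energy
`V(u) = (1/2)∫∫|x-y||u(x)|²|u(y)|²` along `L²`-convergent sequences of nonnegative,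
even, radially nonincreasing functions with fixed mass and bounded first moments. -/
theorem potential_energy_lower_semicontinuous
    (u : ℕ → ℝ → ℝ) (v : ℝ → ℝ) (lam M : ℝ)
    (hpos : ∀ n x, 0 ≤ u n x) (heven : ∀ n x, u n (-x) = u n x)
    (hdecr : ∀ n, ∀ x y : ℝ, |x| ≤ |y| → u n y ≤ u n x)
    (hmem : ∀ n, MemLp (u n) 2 (volume : Measure ℝ))
    (hvmem : MemLp v 2 (volume : Measure ℝ))
    (hmass : ∀ n, (∫ x : ℝ, u n x ^ 2) = lam)
    (hmom : ∀ n, Integrable (fun x => |x| * u n x ^ 2))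
    (hmombdd : ∀ n, (∫ x : ℝ, |x| * u n x ^ 2) ≤ M)
    (hconv : Tendsto (fun n => ∫ x : ℝ, (u n x - v x) ^ 2) atTop (nhds 0)) :
    (1 / 2) * (∫ x : ℝ, ∫ y : ℝ, |x - y| * v x ^ 2 * v y ^ 2) ≤
      atTop.liminf
        (fun n => (1 / 2) * ∫ x : ℝ, ∫ y : ℝ, |x - y| * u n x ^ 2 * u n y ^ 2) :=
  potential_energy_lower_semicontinuous_general u v lam M hmem hvmem hmass hmom hmombdd hconv
end

section
/- (Uniqueness of positive symmetric ground state) The ODE system -φ'' + γVφ = φ, V'' = φ², with γ > 0, admits at most one solution pair (φ, V) with φ even, φ(x) > 0 for all x, φ'(0) = 0, V(0) = V'(0) = 0, and φ(x) → 0 as |x| → ∞. -/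
/-!
Both ground states solve one autonomous first-order system for `(φ, φ', V, V')` with a smooth
field, so they coincide as soon as `φ₁(0) = φ₂(0)`. If instead `φ₁(0) < φ₂(0)`, the Wronskian
`w = φ₁φ₂' - φ₁'φ₂` vanishes at `0` and `w' = γ(V₂ - V₁)φ₁φ₂`. As long as `φ₁ < φ₂` on `[0, z)`,
the equation `V'' = φ²` forces `V₁ < V₂` on `(0, z]`, so `w > 0` there and the ratio `φ₂/φ₁`,
whose derivative is `w/φ₁²`, still exceeds `1` at `z`. Hence `φ₁ < φ₂` on all of `[0, ∞)` and
`w` increases there, contradicting `w → 0` at `+∞`, which holds because `V → ∞` makes `φ'`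
eventually monotone and hence `φ' → 0`.
-/

open Filter Set Topology

theorem ODE_solution_unique_of_locallyLipschitz {E : Type*} [NormedAddCommGroup E]
    [NormedSpace ℝ E] {v : E → E} (hv : LocallyLipschitz v) {f g : ℝ → E}
    (hf : ∀ t, HasDerivAt f (v (f t)) t) (hg : ∀ t, HasDerivAt g (v (g t)) t) {t₀ : ℝ}
    (heq : f t₀ = g t₀) : f = g := by
  have hfc : Continuous f := continuous_iff_continuousAt.2 fun t => (hf t).continuousAt
  have hgc : Continuous g := continuous_iff_continuousAt.2 fun t => (hg t).continuousAt
  have hopen : IsOpen {t | f t = g t} := by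
    refine isOpen_iff_mem_nhds.2 fun t₁ (h₁ : f t₁ = g t₁) => ?_
    obtain ⟨K, U, hU, hK⟩ := hv (f t₁)
    have hfU : ∀ᶠ t in 𝓝 t₁, f t ∈ U := hfc.continuousAt hU
    have hgU : ∀ᶠ t in 𝓝 t₁, g t ∈ U := hgc.continuousAt (h₁ ▸ hU)
    exact ODE_solution_unique_of_eventually (v := fun _ => v) (s := fun _ => U)
      (Eventually.of_forall fun _ => hK) (hfU.mono fun t ht => ⟨hf t, ht⟩)
      (hgU.mono fun t ht => ⟨hg t, ht⟩) h₁
  have huniv := IsClopen.eq_univ ⟨isClosed_eq hfc hgc, hopen⟩ ⟨t₀, heq⟩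
  exact funext (eq_univ_iff_forall.1 huniv)

theorem strictMonoOn_Icc_of_hasDerivAt_pos {f f' : ℝ → ℝ} {a b : ℝ}
    (hf : ∀ x, HasDerivAt f (f' x) x) (hpos : ∀ x ∈ Ioo a b, 0 < f' x) :
    StrictMonoOn f (Icc a b) :=
  strictMonoOn_of_hasDerivWithinAt_pos (convex_Icc a b)
    (HasDerivAt.continuousOn fun x _ => hf x) (fun x _ => (hf x).hasDerivWithinAt)
    (by rwa [interior_Icc])

theorem tendsto_atTop_of_le_deriv {f : ℝ → ℝ} (hf : Differentiable ℝ f) {a c : ℝ} (hc : 0 < c)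
    (h : ∀ x, a ≤ x → c ≤ deriv f x) : Tendsto f atTop atTop := by
  have hlin : ∀ x, a ≤ x → f a + c * (x - a) ≤ f x := fun x hx => by
    have := (convex_Ici a).mul_sub_le_image_sub_of_le_deriv hf.continuous.continuousOn
      hf.differentiableOn (fun y hy => h y (interior_subset hy)) a self_mem_Ici x hx hx
    linarith
  refine tendsto_atTop_mono' _ ((eventually_ge_atTop a).mono hlin) ?_
  exact tendsto_atTop_add_const_left _ _
    ((tendsto_atTop_add_const_right _ (-a) tendsto_id).const_mul_atTop hc)

theorem tendsto_deriv_atTop_of_monotoneOn {f : ℝ → ℝ} {L X : ℝ} (hf : Differentiable ℝ f)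
    (hmono : MonotoneOn (deriv f) (Ici X)) (hlim : Tendsto f atTop (𝓝 L)) :
    Tendsto (deriv f) atTop (𝓝 0) := by
  -- mean value theorem: `f x - f (x - 1) ≤ f' x ≤ f (x + 1) - f x` for large `x`
  have hmvt : ∀ x, ∃ ξ ∈ Ioo x (x + 1), deriv f ξ = f (x + 1) - f x := fun x => by
    obtain ⟨ξ, hξ, h⟩ := exists_deriv_eq_slope f (lt_add_one x) hf.continuous.continuousOn
      hf.differentiableOn
    exact ⟨ξ, hξ, by simpa using h⟩
  have hdiff : Tendsto (fun x => f (x + 1) - f x) atTop (𝓝 0) := by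
    simpa using (hlim.comp (tendsto_atTop_add_const_right _ 1 tendsto_id)).sub hlim
  refine tendsto_of_tendsto_of_tendsto_of_le_of_le'
    (hdiff.comp (tendsto_atTop_add_const_right _ (-1) tendsto_id)) hdiff ?_ ?_
  · filter_upwards [eventually_ge_atTop (X + 1)] with x hx
    obtain ⟨ξ, hξ, hξf⟩ := hmvt (x + -1)
    show f (x + -1 + 1) - f (x + -1) ≤ deriv f x
    rw [← hξf]
    exact hmono (show X ≤ ξ by linarith [hξ.1]) (show X ≤ x by linarith) (by linarith [hξ.2])
  · filter_upwards [eventually_ge_atTop X] with x hx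
    obtain ⟨ξ, hξ, hξf⟩ := hmvt x
    rw [← hξf]
    exact hmono hx (show X ≤ ξ by linarith [hξ.1]) hξ.1.le

theorem lt_of_strong_induction {f g : ℝ → ℝ} (hf : Continuous f) (hg : Continuous g) {a : ℝ}
    (hstep : ∀ z, a ≤ z → (∀ x ∈ Ico a z, f x < g x) → f z < g z) :
    ∀ x, a ≤ x → f x < g x := by
  -- the least point where `f < g` fails would violate `hstep`
  by_contra! hbad
  obtain ⟨x, hx⟩ := hbad
  set S := {x | a ≤ x ∧ g x ≤ f x}
  have hSb : BddBelow S := ⟨a, fun x hx => hx.1⟩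
  have hmem : sInf S ∈ S :=
    (isClosed_Ici.inter (isClosed_le hg hf)).csInf_mem ⟨x, hx⟩ hSb
  refine (hstep _ hmem.1 fun y hy => ?_).not_ge hmem.2
  by_contra! hy'
  exact hy.2.not_ge (csInf_le hSb ⟨hy.1, hy'⟩)

noncomputable def wronskian (f g : ℝ → ℝ) (x : ℝ) : ℝ := f x * deriv g x - deriv f x * g x

theorem hasDerivAt_div_wronskian {f g : ℝ → ℝ} {x : ℝ} (hf : DifferentiableAt ℝ f x)
    (hg : DifferentiableAt ℝ g x) (hx : f x ≠ 0) :
    HasDerivAt (fun y => g y / f y) (wronskian f g x / f x ^ 2) x := by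
  refine (hg.hasDerivAt.div hf.hasDerivAt hx).congr_deriv ?_
  unfold wronskian
  ring

namespace GroundState

structure IsSolution (γ : ℝ) (φ V : ℝ → ℝ) : Prop where
  contDiff_φ : ContDiff ℝ 2 φ
  contDiff_V : ContDiff ℝ 2 V
  eq_φ : ∀ x, -(deriv (deriv φ) x) + γ * V x * φ x = φ x
  eq_V : ∀ x, deriv (deriv V) x = φ x ^ 2

structure IsGroundState (γ : ℝ) (φ V : ℝ → ℝ) : Prop extends IsSolution γ φ V where
  pos : ∀ x, 0 < φ x
  deriv_φ_zero : deriv φ 0 = 0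
  V_zero : V 0 = 0
  deriv_V_zero : deriv V 0 = 0
  tendsto_atTop : Tendsto φ atTop (𝓝 0)

/-- The system as a first-order field on the state `(φ, φ', V, V')`. -/
def field (γ : ℝ) (p : ℝ × ℝ × ℝ × ℝ) : ℝ × ℝ × ℝ × ℝ :=
  (p.2.1, (γ * p.2.2.1 - 1) * p.1, p.2.2.2, p.1 ^ 2)

theorem locallyLipschitz_field (γ : ℝ) : LocallyLipschitz (field γ) :=
  have hC : ContDiff ℝ 1 (field γ) := by unfold field; fun_prop
  hC.locallyLipschitz

namespace IsSolution

variable {γ : ℝ} {φ V φ₁ V₁ φ₂ V₂ : ℝ → ℝ}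

theorem hasDerivAt_φ (h : IsSolution γ φ V) (x : ℝ) : HasDerivAt φ (deriv φ x) x :=
  (h.contDiff_φ.differentiable two_ne_zero x).hasDerivAt

theorem hasDerivAt_V (h : IsSolution γ φ V) (x : ℝ) : HasDerivAt V (deriv V x) x :=
  (h.contDiff_V.differentiable two_ne_zero x).hasDerivAt

theorem hasDerivAt_deriv_φ (h : IsSolution γ φ V) (x : ℝ) :
    HasDerivAt (deriv φ) ((γ * V x - 1) * φ x) x := by
  have e : deriv (deriv φ) x = (γ * V x - 1) * φ x := by linear_combination -h.eq_φ x
  exact e ▸ (h.contDiff_φ.differentiable_deriv_two x).hasDerivAt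

theorem hasDerivAt_deriv_V (h : IsSolution γ φ V) (x : ℝ) :
    HasDerivAt (deriv V) (φ x ^ 2) x :=
  h.eq_V x ▸ (h.contDiff_V.differentiable_deriv_two x).hasDerivAt

theorem hasDerivAt_state (h : IsSolution γ φ V) (t : ℝ) :
    HasDerivAt (fun t => (φ t, deriv φ t, V t, deriv V t))
      (field γ (φ t, deriv φ t, V t, deriv V t)) t :=
  (h.hasDerivAt_φ t).prodMk ((h.hasDerivAt_deriv_φ t).prodMk
    ((h.hasDerivAt_V t).prodMk (h.hasDerivAt_deriv_V t)))

theorem eq_of_initial_eq (h₁ : IsSolution γ φ₁ V₁) (h₂ : IsSolution γ φ₂ V₂) {t₀ : ℝ}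
    (hφ : φ₁ t₀ = φ₂ t₀) (hφ' : deriv φ₁ t₀ = deriv φ₂ t₀) (hV : V₁ t₀ = V₂ t₀)
    (hV' : deriv V₁ t₀ = deriv V₂ t₀) : φ₁ = φ₂ ∧ V₁ = V₂ := by
  have hstate := ODE_solution_unique_of_locallyLipschitz (locallyLipschitz_field γ)
    h₁.hasDerivAt_state h₂.hasDerivAt_state (t₀ := t₀) (by rw [hφ, hφ', hV, hV'])
  exact ⟨funext fun t => congrArg (·.1) (congrFun hstate t),
    funext fun t => congrArg (·.2.2.1) (congrFun hstate t)⟩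

theorem tendsto_V_atTop (h : IsSolution γ φ V) (hpos : ∀ x, 0 < φ x)
    (hV' : deriv V 0 = 0) : Tendsto V atTop atTop := by
  have hmono : StrictMono (deriv V) :=
    strictMono_of_hasDerivAt_pos h.hasDerivAt_deriv_V fun x => pow_pos (hpos x) 2
  exact tendsto_atTop_of_le_deriv (h.contDiff_V.differentiable two_ne_zero)
    (hV' ▸ hmono one_pos) fun x hx => hmono.monotone hx

theorem tendsto_deriv_φ_atTop (h : IsSolution γ φ V) (hγ : 0 < γ) (hpos : ∀ x, 0 < φ x)
    (hV' : deriv V 0 = 0) (hlim : Tendsto φ atTop (𝓝 0)) :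
    Tendsto (deriv φ) atTop (𝓝 0) := by
  obtain ⟨X, hX⟩ := eventually_atTop.1
    (((h.tendsto_V_atTop hpos hV').const_mul_atTop hγ).eventually_ge_atTop 1)
  refine tendsto_deriv_atTop_of_monotoneOn (h.contDiff_φ.differentiable two_ne_zero)
    (monotoneOn_of_hasDerivWithinAt_nonneg (convex_Ici X)
      (HasDerivAt.continuousOn fun x _ => h.hasDerivAt_deriv_φ x)
      (fun x _ => (h.hasDerivAt_deriv_φ x).hasDerivWithinAt) fun x hx => ?_) hlim
  rw [interior_Ici] at hx
  exact mul_nonneg (by linarith [hX x (le_of_lt hx)]) (hpos x).le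

theorem hasDerivAt_wronskian (h₁ : IsSolution γ φ₁ V₁) (h₂ : IsSolution γ φ₂ V₂) (x : ℝ) :
    HasDerivAt (wronskian φ₁ φ₂) (γ * (V₂ x - V₁ x) * (φ₁ x * φ₂ x)) x := by
  refine (((h₁.hasDerivAt_φ x).mul (h₂.hasDerivAt_deriv_φ x)).sub
    ((h₁.hasDerivAt_deriv_φ x).mul (h₂.hasDerivAt_φ x))).congr_deriv ?_
  ring

theorem V_lt_of_φ_lt (h₁ : IsSolution γ φ₁ V₁) (h₂ : IsSolution γ φ₂ V₂)
    (hpos₁ : ∀ x, 0 < φ₁ x) (hV : V₁ 0 = V₂ 0) (hV' : deriv V₁ 0 = deriv V₂ 0) {z : ℝ}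
    (hlt : ∀ x ∈ Ico 0 z, φ₁ x < φ₂ x) : ∀ x ∈ Ioc 0 z, V₁ x < V₂ x := by
  have hV'mono : StrictMonoOn (fun x => deriv V₂ x - deriv V₁ x) (Icc 0 z) :=
    strictMonoOn_Icc_of_hasDerivAt_pos
      (fun x => (h₂.hasDerivAt_deriv_V x).fun_sub (h₁.hasDerivAt_deriv_V x))
      fun x hx => by nlinarith [hpos₁ x, hlt x (Ioo_subset_Ico_self hx)]
  have hV'lt : ∀ x ∈ Ioc 0 z, deriv V₁ x < deriv V₂ x := fun x hx => by
    have := hV'mono (left_mem_Icc.2 (hx.1.le.trans hx.2)) (Ioc_subset_Icc_self hx) hx.1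
    linarith
  have hVmono : StrictMonoOn (fun x => V₂ x - V₁ x) (Icc 0 z) :=
    strictMonoOn_Icc_of_hasDerivAt_pos (fun x => (h₂.hasDerivAt_V x).fun_sub (h₁.hasDerivAt_V x))
      fun x hx => sub_pos.2 (hV'lt x (Ioo_subset_Ioc_self hx))
  intro x hx
  have := hVmono (left_mem_Icc.2 (hx.1.le.trans hx.2)) (Ioc_subset_Icc_self hx) hx.1
  linarith

theorem strictMonoOn_wronskian (h₁ : IsSolution γ φ₁ V₁) (h₂ : IsSolution γ φ₂ V₂)
    (hγ : 0 < γ) (hpos₁ : ∀ x, 0 < φ₁ x) (hV : V₁ 0 = V₂ 0) (hV' : deriv V₁ 0 = deriv V₂ 0)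
    {z : ℝ} (hlt : ∀ x ∈ Ico 0 z, φ₁ x < φ₂ x) : StrictMonoOn (wronskian φ₁ φ₂) (Icc 0 z) :=
  strictMonoOn_Icc_of_hasDerivAt_pos (h₁.hasDerivAt_wronskian h₂) fun x hx =>
    have hVx := h₁.V_lt_of_φ_lt h₂ hpos₁ hV hV' hlt x (Ioo_subset_Ioc_self hx)
    have hφx := hlt x (Ioo_subset_Ico_self hx)
    mul_pos (mul_pos hγ (sub_pos.2 hVx)) (mul_pos (hpos₁ x) ((hpos₁ x).trans hφx))

theorem lt_of_forall_Ico_lt (h₁ : IsSolution γ φ₁ V₁) (h₂ : IsSolution γ φ₂ V₂)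
    (hγ : 0 < γ) (hpos₁ : ∀ x, 0 < φ₁ x) (hV : V₁ 0 = V₂ 0) (hV' : deriv V₁ 0 = deriv V₂ 0)
    (hw : wronskian φ₁ φ₂ 0 = 0) (h0 : φ₁ 0 < φ₂ 0) {z : ℝ} (hz : 0 ≤ z)
    (hlt : ∀ x ∈ Ico 0 z, φ₁ x < φ₂ x) : φ₁ z < φ₂ z := by
  have hw_pos : ∀ x ∈ Ioo 0 z, 0 < wronskian φ₁ φ₂ x := fun x hx =>
    hw ▸ h₁.strictMonoOn_wronskian h₂ hγ hpos₁ hV hV' hlt (left_mem_Icc.2 hz)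
      (Ioo_subset_Icc_self hx) hx.1
  have hratio : StrictMonoOn (fun x => φ₂ x / φ₁ x) (Icc 0 z) :=
    strictMonoOn_Icc_of_hasDerivAt_pos
      (fun x => hasDerivAt_div_wronskian (h₁.hasDerivAt_φ x).differentiableAt
        (h₂.hasDerivAt_φ x).differentiableAt (hpos₁ x).ne')
      fun x hx => div_pos (hw_pos x hx) (pow_pos (hpos₁ x) 2)
  have hz_ratio : φ₂ 0 / φ₁ 0 ≤ φ₂ z / φ₁ z :=
    hratio.monotoneOn (left_mem_Icc.2 hz) (right_mem_Icc.2 hz) hz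
  have h0_ratio : 1 < φ₂ 0 / φ₁ 0 := (one_lt_div (hpos₁ 0)).2 h0
  exact (one_lt_div (hpos₁ z)).1 (h0_ratio.trans_le hz_ratio)

theorem not_lt_of_tendsto_wronskian (h₁ : IsSolution γ φ₁ V₁) (h₂ : IsSolution γ φ₂ V₂)
    (hγ : 0 < γ) (hpos₁ : ∀ x, 0 < φ₁ x) (hV : V₁ 0 = V₂ 0) (hV' : deriv V₁ 0 = deriv V₂ 0)
    (hw : wronskian φ₁ φ₂ 0 = 0) (hlim : Tendsto (wronskian φ₁ φ₂) atTop (𝓝 0)) :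
    ¬ φ₁ 0 < φ₂ 0 := by
  intro h0
  have hlt : ∀ x, 0 ≤ x → φ₁ x < φ₂ x :=
    lt_of_strong_induction (h₁.contDiff_φ.continuous) (h₂.contDiff_φ.continuous)
      fun z hz => h₁.lt_of_forall_Ico_lt h₂ hγ hpos₁ hV hV' hw h0 hz
  have hmono : ∀ z, StrictMonoOn (wronskian φ₁ φ₂) (Icc 0 z) := fun z =>
    h₁.strictMonoOn_wronskian h₂ hγ hpos₁ hV hV' fun x hx => hlt x hx.1
  have hw1 : 0 < wronskian φ₁ φ₂ 1 :=
    hw ▸ hmono 1 (left_mem_Icc.2 zero_le_one) (right_mem_Icc.2 zero_le_one) one_pos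
  have hge : ∀ᶠ x in atTop, wronskian φ₁ φ₂ 1 ≤ wronskian φ₁ φ₂ x :=
    (eventually_ge_atTop 1).mono fun x hx =>
      (hmono x).monotoneOn ⟨zero_le_one, hx⟩ ⟨zero_le_one.trans hx, le_rfl⟩ hx
  exact hw1.not_ge (ge_of_tendsto hlim hge)

end IsSolution

namespace IsGroundState

variable {γ : ℝ} {φ₁ V₁ φ₂ V₂ : ℝ → ℝ}

theorem tendsto_wronskian (h₁ : IsGroundState γ φ₁ V₁) (h₂ : IsGroundState γ φ₂ V₂)
    (hγ : 0 < γ) : Tendsto (wronskian φ₁ φ₂) atTop (𝓝 0) := by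
  have hd₁ := h₁.tendsto_deriv_φ_atTop hγ h₁.pos h₁.deriv_V_zero h₁.tendsto_atTop
  have hd₂ := h₂.tendsto_deriv_φ_atTop hγ h₂.pos h₂.deriv_V_zero h₂.tendsto_atTop
  have hlim := (h₁.tendsto_atTop.mul hd₂).sub (hd₁.mul h₂.tendsto_atTop)
  rwa [mul_zero, sub_zero] at hlim

theorem apply_zero_le (h₁ : IsGroundState γ φ₁ V₁) (h₂ : IsGroundState γ φ₂ V₂)
    (hγ : 0 < γ) : φ₂ 0 ≤ φ₁ 0 :=
  not_lt.1 <| h₁.not_lt_of_tendsto_wronskian h₂.toIsSolution hγ h₁.pos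
    (h₁.V_zero.trans h₂.V_zero.symm) (h₁.deriv_V_zero.trans h₂.deriv_V_zero.symm)
    (by simp [wronskian, h₁.deriv_φ_zero, h₂.deriv_φ_zero]) (h₁.tendsto_wronskian h₂ hγ)

theorem eq (h₁ : IsGroundState γ φ₁ V₁) (h₂ : IsGroundState γ φ₂ V₂) (hγ : 0 < γ) :
    φ₁ = φ₂ ∧ V₁ = V₂ :=
  h₁.eq_of_initial_eq h₂.toIsSolution ((h₂.apply_zero_le h₁ hγ).antisymm
    (h₁.apply_zero_le h₂ hγ)) (h₁.deriv_φ_zero.trans h₂.deriv_φ_zero.symm)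
    (h₁.V_zero.trans h₂.V_zero.symm) (h₁.deriv_V_zero.trans h₂.deriv_V_zero.symm)

end IsGroundState

end GroundState

theorem ground_state_unique_general (γ : ℝ) (hγ : 0 < γ)
    (φ₁ V₁ φ₂ V₂ : ℝ → ℝ)
    (hφ₁ : ContDiff ℝ 2 φ₁) (hV₁ : ContDiff ℝ 2 V₁)
    (hφ₂ : ContDiff ℝ 2 φ₂) (hV₂ : ContDiff ℝ 2 V₂)
    (heq₁ : ∀ x, -(deriv (deriv φ₁) x) + γ * V₁ x * φ₁ x = φ₁ x)
    (heqV₁ : ∀ x, deriv (deriv V₁) x = φ₁ x ^ 2)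
    (heq₂ : ∀ x, -(deriv (deriv φ₂) x) + γ * V₂ x * φ₂ x = φ₂ x)
    (heqV₂ : ∀ x, deriv (deriv V₂) x = φ₂ x ^ 2)
    (hpos₁ : ∀ x, 0 < φ₁ x) (hpos₂ : ∀ x, 0 < φ₂ x)
    (hd₁ : deriv φ₁ 0 = 0) (hd₂ : deriv φ₂ 0 = 0)
    (hV₁0 : V₁ 0 = 0) (hV₁0' : deriv V₁ 0 = 0)
    (hV₂0 : V₂ 0 = 0) (hV₂0' : deriv V₂ 0 = 0)
    (hlim₁ : Tendsto φ₁ (cocompact ℝ) (nhds 0))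
    (hlim₂ : Tendsto φ₂ (cocompact ℝ) (nhds 0)) :
    φ₁ = φ₂ ∧ V₁ = V₂ :=
  GroundState.IsGroundState.eq
    ⟨⟨hφ₁, hV₁, heq₁, heqV₁⟩, hpos₁, hd₁, hV₁0, hV₁0', hlim₁.mono_left atTop_le_cocompact⟩
    ⟨⟨hφ₂, hV₂, heq₂, heqV₂⟩, hpos₂, hd₂, hV₂0, hV₂0', hlim₂.mono_left atTop_le_cocompact⟩ hγ

/-- Uniqueness of the positive even ground state of the system
`-φ'' + γVφ = φ`, `V'' = φ²` with `V(0) = V'(0) = 0`, `φ'(0) = 0`, `φ > 0`,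
`φ → 0` at infinity. -/
theorem ground_state_unique (γ : ℝ) (hγ : 0 < γ)
    (φ₁ V₁ φ₂ V₂ : ℝ → ℝ)
    (hφ₁ : ContDiff ℝ 2 φ₁) (hV₁ : ContDiff ℝ 2 V₁)
    (hφ₂ : ContDiff ℝ 2 φ₂) (hV₂ : ContDiff ℝ 2 V₂)
    (heq₁ : ∀ x, -(deriv (deriv φ₁) x) + γ * V₁ x * φ₁ x = φ₁ x)
    (heqV₁ : ∀ x, deriv (deriv V₁) x = φ₁ x ^ 2)
    (heq₂ : ∀ x, -(deriv (deriv φ₂) x) + γ * V₂ x * φ₂ x = φ₂ x)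
    (heqV₂ : ∀ x, deriv (deriv V₂) x = φ₂ x ^ 2)
    (heven₁ : ∀ x, φ₁ (-x) = φ₁ x) (heven₂ : ∀ x, φ₂ (-x) = φ₂ x)
    (hpos₁ : ∀ x, 0 < φ₁ x) (hpos₂ : ∀ x, 0 < φ₂ x)
    (hd₁ : deriv φ₁ 0 = 0) (hd₂ : deriv φ₂ 0 = 0)
    (hV₁0 : V₁ 0 = 0) (hV₁0' : deriv V₁ 0 = 0)
    (hV₂0 : V₂ 0 = 0) (hV₂0' : deriv V₂ 0 = 0)
    (hlim₁ : Tendsto φ₁ (cocompact ℝ) (nhds 0))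
    (hlim₂ : Tendsto φ₂ (cocompact ℝ) (nhds 0)) :
    φ₁ = φ₂ ∧ V₁ = V₂ :=
  ground_state_unique_general γ hγ φ₁ V₁ φ₂ V₂ hφ₁ hV₁ hφ₂ hV₂ heq₁ heqV₁ heq₂ heqV₂ hpos₁ hpos₂ hd₁
    hd₂ hV₁0 hV₁0' hV₂0 hV₂0' hlim₁ hlim₂
end

section
/- The Hamiltonian 𝓔(φ, φ', V, V') = φ'² + φ² + (γ/2)V'² - γVφ² is conserved along solutions of the system -φ'' + γVφ = φ, V'' = φ², i.e. its derivative along any C² solution is identically zero. -/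
/-! Differentiating 𝓔 gives `2φ'(φ'' + φ - γVφ) + γV'(V'' - φ²)`, and each bracket vanishes
by one of the two equations. -/

noncomputable def hamiltonian (γ : ℝ) (φ V : ℝ → ℝ) (t : ℝ) : ℝ :=
  deriv φ t ^ 2 + φ t ^ 2 + (γ / 2) * deriv V t ^ 2 - γ * V t * φ t ^ 2

theorem hasDerivAt_hamiltonian {γ : ℝ} {φ V : ℝ → ℝ} {x : ℝ}
    (hφ : DifferentiableAt ℝ φ x) (hφ' : DifferentiableAt ℝ (deriv φ) x)
    (hV : DifferentiableAt ℝ V x) (hV' : DifferentiableAt ℝ (deriv V) x) :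
    HasDerivAt (hamiltonian γ φ V)
      (2 * deriv φ x * (deriv (deriv φ) x + φ x - γ * V x * φ x)
        + γ * deriv V x * (deriv (deriv V) x - φ x ^ 2)) x := by
  have h := (((hφ'.hasDerivAt.fun_pow 2).add (hφ.hasDerivAt.fun_pow 2)).add
    ((hV'.hasDerivAt.fun_pow 2).const_mul (γ / 2))).sub
    ((hV.hasDerivAt.const_mul γ).fun_mul (hφ.hasDerivAt.fun_pow 2))
  exact h.congr_deriv (by ring)

/-- The Hamiltonian `𝓔 = φ'² + φ² + (γ/2)V'² - γVφ²` is conserved along `C²`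
solutions of `-φ'' + γVφ = φ`, `V'' = φ²`. -/
theorem hamiltonian_conserved (γ : ℝ) (φ V : ℝ → ℝ)
    (hφ : ContDiff ℝ 2 φ) (hV : ContDiff ℝ 2 V)
    (heq : ∀ x, -(deriv (deriv φ) x) + γ * V x * φ x = φ x)
    (heqV : ∀ x, deriv (deriv V) x = φ x ^ 2) :
    ∀ x : ℝ,
      deriv (fun t =>
        deriv φ t ^ 2 + φ t ^ 2 + (γ / 2) * deriv V t ^ 2 - γ * V t * φ t ^ 2) x = 0 := by
  intro x
  have hφ_eq : deriv (deriv φ) x + φ x - γ * V x * φ x = 0 := by linarith [heq x]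
  have hV_eq : deriv (deriv V) x - φ x ^ 2 = 0 := sub_eq_zero.mpr (heqV x)
  have h := hasDerivAt_hamiltonian (γ := γ) (hφ.differentiable two_ne_zero x)
    (hφ.differentiable_deriv_two x) (hV.differentiable two_ne_zero x)
    (hV.differentiable_deriv_two x)
  rw [hφ_eq, hV_eq, mul_zero, mul_zero, add_zero] at h
  exact h.deriv
end
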